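/- Let H^MPS_{D,m} ⊆ ((Fin m → Fin d) → ℂ) be the ℂ-linear span of all m-site matrix product states ψ(ω,A,m) with ω ∈ M_D(ℂ) and A : Fin d → M_D(ℂ). Then dim_ℂ H^MPS_{D,m} ≤ D² · binom(m + dD² − 1, dD² − 1). In particular, for fixed d and D this dimension is bounded by a polynomial in m, whereas the ambient space has dimension d^m. -/

import Mathlib

open Matrix

/-- The ordered matrix product `A_{i_1} ⋯ A_{i_n}` associated to an index string `i`. -/
noncomputable def mpsProd {d D n : ℕ} (A : Fin d → Matrix (Fin D) (Fin D) ℂ)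
    (i : Fin n → Fin d) : Matrix (Fin D) (Fin D) ℂ :=
  ((List.finRange n).map fun t => A (i t)).prod

/-- The matrix product state `ψ(ω,A,n)`, as a vector of `(ℂ^d)^{⊗n}` modeled by
the function space `(Fin n → Fin d) → ℂ`. -/
noncomputable def mps {d D n : ℕ} (ω : Matrix (Fin D) (Fin D) ℂ)
    (A : Fin d → Matrix (Fin D) (Fin D) ℂ) : (Fin n → Fin d) → ℂ :=
  fun i => (ω * mpsProd A i).trace

/-!
Entry `(b, a)` of `A_{i_1} ⋯ A_{i_m}` is the value at the entries of `A` of the same entry of the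
product of generic matrices, a homogeneous polynomial of degree `m` in the `dD²` entry variables.
Expanding it in the `multichoose (dD²) m` monomials `s` of degree `m` gives
`ψ(ω,A,m) = ∑_{a,b,s} ω_{ab} A^s c_{a,b,s}`, where `c_{a,b,s}(i)` is the coefficient of `s` in
that entry. The `D² · multichoose (dD²) m` vectors `c_{a,b,s}` do not depend on `(ω, A)`, so
they span a space containing every matrix product state.
-/

open MvPolynomial Finset

namespace MvPolynomial

variable {σ R ι : Type*} [CommSemiring R]

theorem isHomogeneous_list_prod_apply [Fintype ι] [DecidableEq ι]
    (l : List (Matrix ι ι (MvPolynomial σ R)))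
    (hl : ∀ M ∈ l, ∀ a b, (M a b).IsHomogeneous 1) (a b : ι) :
    (l.prod a b).IsHomogeneous l.length := by
  induction l generalizing a b with
  | nil =>
    rw [List.prod_nil, Matrix.one_apply]
    split_ifs
    exacts [isHomogeneous_one _ _, isHomogeneous_zero _ _ _]
  | cons M l ih =>
    rw [List.prod_cons, Matrix.mul_apply, List.length_cons, add_comm]
    exact IsHomogeneous.sum _ _ _ fun c _ =>
      (hl M List.mem_cons_self a c).mul (ih (fun N hN => hl N (List.mem_cons_of_mem _ hN)) c b)

theorem IsHomogeneous.eval_eq_sum_sym [Fintype σ] [DecidableEq σ] {p : MvPolynomial σ R}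
    {m : ℕ} (hp : p.IsHomogeneous m) (f : σ → R) :
    eval f p = ∑ s : Sym σ m, coeff (Multiset.toFinsupp (s : Multiset σ)) p *
      ∏ v, f v ^ (s : Multiset σ).count v := by
  have hsupp :
      p.support ⊆ univ.image fun s : Sym σ m => Multiset.toFinsupp (s : Multiset σ) := by
    intro e he
    have hcard : Multiset.card (Finsupp.toMultiset e) = m := by
      rw [Finsupp.card_toMultiset, hp.degree_eq_sum_deg_support he]; rfl
    exact mem_image.mpr ⟨⟨_, hcard⟩, mem_univ _, Finsupp.toMultiset_toFinsupp e⟩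
  rw [eval_eq', sum_subset hsupp fun e _ he => by simp [notMem_support_iff.mp he],
    sum_image fun s _ t _ h => Sym.coe_injective (Multiset.toFinsupp.injective h)]
  simp only [Multiset.toFinsupp_apply]

end MvPolynomial

section MPS

variable {d D : ℕ}

noncomputable def genericMatrix (d D : ℕ) (j : Fin d) :
    Matrix (Fin D) (Fin D) (MvPolynomial (Fin d × Fin D × Fin D) ℂ) :=
  Matrix.of fun a b => X (j, a, b)

noncomputable def genericProd {n : ℕ} (i : Fin n → Fin d) :
    Matrix (Fin D) (Fin D) (MvPolynomial (Fin d × Fin D × Fin D) ℂ) :=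
  ((List.finRange n).map fun t => genericMatrix d D (i t)).prod

def entryValuation (A : Fin d → Matrix (Fin D) (Fin D) ℂ) : Fin d × Fin D × Fin D → ℂ :=
  fun v => A v.1 v.2.1 v.2.2

theorem mpsProd_eq_map_eval {n : ℕ} (A : Fin d → Matrix (Fin D) (Fin D) ℂ)
    (i : Fin n → Fin d) :
    mpsProd A i = (genericProd i).map (eval (entryValuation A)) := by
  have hA : ∀ j, (genericMatrix d D j).map (eval (entryValuation A)) = A j := fun j => by
    ext a b; simp [genericMatrix, entryValuation]
  simp only [genericProd, ← RingHom.mapMatrix_apply, map_list_prod, List.map_map]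
  simp only [Function.comp_def, RingHom.mapMatrix_apply, hA, mpsProd]

theorem isHomogeneous_genericProd_apply {n : ℕ} (i : Fin n → Fin d) (a b : Fin D) :
    (genericProd i a b).IsHomogeneous n := by
  unfold genericProd
  have hgen : ∀ M ∈ (List.finRange n).map fun t => genericMatrix d D (i t),
      ∀ a b, (M a b).IsHomogeneous 1 := by
    simp only [List.mem_map]
    rintro _ ⟨t, -, rfl⟩ a b
    exact isHomogeneous_X _ _
  simpa using isHomogeneous_list_prod_apply _ hgen a b

noncomputable def genericProdCoeff (D : ℕ) {m : ℕ}
    (x : (Fin D × Fin D) × Sym (Fin d × Fin D × Fin D) m) : (Fin m → Fin d) → ℂ :=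
  fun i => coeff (Multiset.toFinsupp (x.2 : Multiset _)) (genericProd i x.1.2 x.1.1)

theorem mps_mem_span_genericProdCoeff {m : ℕ} (ω : Matrix (Fin D) (Fin D) ℂ)
    (A : Fin d → Matrix (Fin D) (Fin D) ℂ) :
    mps (n := m) ω A ∈ Submodule.span ℂ (Set.range (genericProdCoeff D)) := by
  suffices mps (n := m) ω A = ∑ x, (ω x.1.1 x.1.2 *
      ∏ v, entryValuation A v ^ (x.2 : Multiset _).count v) • genericProdCoeff D x from
    this ▸ Submodule.sum_mem _ fun x _ =>
      Submodule.smul_mem _ _ (Submodule.subset_span ⟨x, rfl⟩)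
  ext i
  simp only [mps, Matrix.trace, Matrix.diag, Matrix.mul_apply, mpsProd_eq_map_eval,
    Matrix.map_apply, (isHomogeneous_genericProd_apply _ _ _).eval_eq_sum_sym, Finset.mul_sum,
    Finset.sum_apply, Pi.smul_apply, smul_eq_mul, Fintype.sum_prod_type, genericProdCoeff]
  refine sum_congr rfl fun a _ => sum_congr rfl fun b _ => sum_congr rfl fun s _ => ?_
  ring

end MPS

-- An equality for `n ≥ 1`; for `n = 0` the truncated subtractions make the right side `1`.
theorem Nat.multichoose_le_choose (n k : ℕ) : n.multichoose k ≤ (k + n - 1).choose (n - 1) := by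
  cases n with
  | zero => cases k <;> simp
  | succ n =>
    rw [Nat.multichoose_eq, show n + 1 + k - 1 = n + k by omega,
      show k + (n + 1) - 1 = n + k by omega, Nat.add_sub_cancel]
    exact Nat.choose_symm_add.ge

theorem stmt3_general (d D m : ℕ) :
    Module.finrank ℂ
      ↥(Submodule.span ℂ (Set.range fun ωA :
          Matrix (Fin D) (Fin D) ℂ × (Fin d → Matrix (Fin D) (Fin D) ℂ) =>
            mps (n := m) ωA.1 ωA.2))
      ≤ D ^ 2 * Nat.choose (m + d * D ^ 2 - 1) (d * D ^ 2 - 1) := by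
  have hspan : Submodule.span ℂ (Set.range fun ωA :
      Matrix (Fin D) (Fin D) ℂ × (Fin d → Matrix (Fin D) (Fin D) ℂ) =>
        mps (n := m) ωA.1 ωA.2) ≤ Submodule.span ℂ (Set.range (genericProdCoeff D)) :=
    Submodule.span_le.mpr <| Set.range_subset_iff.mpr fun ωA =>
      mps_mem_span_genericProdCoeff ωA.1 ωA.2
  have hcard : Fintype.card ((Fin D × Fin D) × Sym (Fin d × Fin D × Fin D) m) =
      D ^ 2 * (d * D ^ 2).multichoose m := by
    simp only [Fintype.card_prod, Fintype.card_fin, Sym.card_sym_eq_multichoose, ← sq]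
  calc _ ≤ Fintype.card ((Fin D × Fin D) × Sym (Fin d × Fin D × Fin D) m) :=
        (Submodule.finrank_mono hspan).trans (finrank_range_le_card _)
    _ ≤ _ := hcard ▸ Nat.mul_le_mul_left _ (Nat.multichoose_le_choose _ _)

/-- The dimension of the span of `m`-site matrix product states of bond dimension `D`
is at most `D² · binom(m + dD² − 1, dD² − 1)`. -/
theorem stmt3 (d D m : ℕ) (hd : 0 < d) (hD : 0 < D) :
    Module.finrank ℂ
      ↥(Submodule.span ℂ (Set.range fun ωA :
          Matrix (Fin D) (Fin D) ℂ × (Fin d → Matrix (Fin D) (Fin D) ℂ) =>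
            mps (n := m) ωA.1 ωA.2))
      ≤ D ^ 2 * Nat.choose (m + d * D ^ 2 - 1) (d * D ^ 2 - 1) :=
  stmt3_general d D m
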